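/- arXiv:0710.3287 — 2 statements merged into one kernel-verified Lean document; each statement's English description precedes it below -/
import Mathlib

section
/- For c ∈ (0,1), the sequence p_k = (k^k / k!) (1-c) c^k e^{-kc}, k = 0, 1, 2, ..., defines a probability distribution on the nonnegative integers, i.e., all p_k ≥ 0 and ∑_{k=0}^∞ p_k = 1. -/
/-!
Expanding `exp (-k c) = ∑ₘ (-k c)ᵐ / m!` turns `∑ₖ kᵏ / k! (c e⁻ᶜ)ᵏ` into a double series whose
`n`-th antidiagonal is `cⁿ / n! · ∑ₖ (-1)ⁿ⁻ᵏ (n choose k) kⁿ = cⁿ`, the inner sum being the `n`-th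
forward difference of `x ↦ xⁿ`, i.e. `n!`. When `c e^(c+1) < 1` the double series converges
absolutely, so the series equals `∑ cⁿ = 1 / (1 - c)`. Since `c e⁻ᶜ < 1/e` for `c ≠ 1`, the point
`c e⁻ᶜ` stays inside the disc of convergence of `∑ kᵏ / k! xᵏ`, so `(1 - c) ∑ₖ kᵏ / k! (c e⁻ᶜ)ᵏ` is
analytic on `(0, 1)` and the identity extends from small `c` to all of `(0, 1)`.
-/

open Finset Nat Real Metric

theorem sum_range_neg_one_pow_mul_choose_mul_pow_self {R : Type*} [CommRing R] (n : ℕ) :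
    ∑ k ∈ range (n + 1), (-1 : R) ^ (n - k) * n.choose k * (k : R) ^ n = n ! := by
  have h := congr_fun (fwdDiff_iter_eq_factorial (R := R) (n := n)) 0
  rw [fwdDiff_iter_eq_sum_shift] at h
  simpa [zsmul_eq_mul] using h

theorem sum_antidiagonal_pow_self_div_factorial_mul_pow_mul_neg {K : Type*} [Field K] [CharZero K]
    (c : K) (n : ℕ) :
    ∑ p ∈ antidiagonal n, (p.1 : K) ^ p.1 / p.1 ! * c ^ p.1 * ((-(p.1 * c)) ^ p.2 / p.2 !)
      = c ^ n := by
  have hterm : ∀ p ∈ antidiagonal n,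
      (p.1 : K) ^ p.1 / p.1 ! * c ^ p.1 * ((-(p.1 * c)) ^ p.2 / p.2 !)
        = (-1) ^ p.2 * n.choose p.1 * (p.1 : K) ^ n * (c ^ n / n !) := by
    rintro ⟨k, m⟩ hkm
    rw [HasAntidiagonal.mem_antidiagonal] at hkm
    subst hkm
    rw [Nat.cast_add_choose]
    field_simp [Nat.factorial_ne_zero]
    ring
  rw [sum_congr rfl hterm, ← sum_mul,
    Nat.sum_antidiagonal_eq_sum_range_succ fun k m => (-1 : K) ^ m * n.choose k * (k : K) ^ n,
    sum_range_neg_one_pow_mul_choose_mul_pow_self]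
  field_simp [Nat.factorial_ne_zero]

theorem HasSum.sum_antidiagonal {α : Type*} [AddCommMonoid α] [TopologicalSpace α]
    [ContinuousAdd α] [RegularSpace α] {f : ℕ × ℕ → α} {a : α} (hf : HasSum f a) :
    HasSum (fun n => ∑ p ∈ antidiagonal n, f p) a := by
  have h := (HasAntidiagonal.sigmaAntidiagonalEquivProd.hasSum_iff).mpr hf
  exact h.sigma fun n => Finset.hasSum _ f

theorem Real.hasSum_pow_div_factorial (x : ℝ) : HasSum (fun n => x ^ n / n !) (exp x) := by
  rw [exp_eq_exp_ℝ]
  exact NormedSpace.expSeries_div_hasSum_exp x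

theorem summable_pow_self_div_factorial_mul_pow_mul_neg {c : ℝ} (hc0 : 0 ≤ c)
    (hc : c * exp (c + 1) < 1) :
    Summable fun p : ℕ × ℕ => (p.1 : ℝ) ^ p.1 / p.1 ! * c ^ p.1 * ((-(p.1 * c)) ^ p.2 / p.2 !) := by
  refine Summable.of_abs ?_
  have habs : ∀ p : ℕ × ℕ, |(p.1 : ℝ) ^ p.1 / p.1 ! * c ^ p.1 * ((-(p.1 * c)) ^ p.2 / p.2 !)|
      = (p.1 : ℝ) ^ p.1 / p.1 ! * c ^ p.1 * ((p.1 * c) ^ p.2 / p.2 !) := fun p => by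
    simp only [abs_mul, abs_div, abs_pow, abs_neg, Nat.abs_cast, abs_of_nonneg hc0]
  simp_rw [habs]
  rw [summable_prod_of_nonneg fun _ => by positivity]
  refine ⟨fun k => ((hasSum_pow_div_factorial ((k : ℝ) * c)).mul_left
    ((k : ℝ) ^ k / k ! * c ^ k)).summable, ?_⟩
  simp_rw [tsum_mul_left, (hasSum_pow_div_factorial _).tsum_eq]
  refine (summable_geometric_of_lt_one (by positivity) hc).of_nonneg_of_le
    (fun k => by positivity) fun k => ?_
  calc (k : ℝ) ^ k / k ! * c ^ k * exp (k * c)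
      ≤ exp k * c ^ k * exp (k * c) := by gcongr; exact pow_div_factorial_le_exp _ k.cast_nonneg k
    _ = (c * exp (c + 1)) ^ k := by
      rw [mul_pow, ← exp_nat_mul, mul_comm (exp _), mul_assoc, ← exp_add]
      ring_nf

theorem tsum_pow_self_div_factorial_mul_pow_mul_exp_neg {c : ℝ} (hc0 : 0 ≤ c)
    (hc : c * exp (c + 1) < 1) :
    ∑' k : ℕ, (k : ℝ) ^ k / k ! * (c * exp (-c)) ^ k = (1 - c)⁻¹ := by
  have hsum := summable_pow_self_div_factorial_mul_pow_mul_neg hc0 hc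
  have hc1 : c < 1 := by nlinarith [add_one_le_exp (c + 1)]
  have hdiag := hsum.hasSum.sum_antidiagonal
  simp_rw [sum_antidiagonal_pow_self_div_factorial_mul_pow_mul_neg] at hdiag
  rw [(hasSum_geometric_of_lt_one hc0 hc1).unique hdiag, hsum.tsum_prod]
  refine tsum_congr fun k => ?_
  dsimp only
  rw [tsum_mul_left, (hasSum_pow_div_factorial _).tsum_eq, mul_pow, ← exp_nat_mul]
  ring_nf

theorem mul_exp_neg_lt_exp_neg_one {c : ℝ} (hc : c ≠ 1) : c * exp (-c) < exp (-1) := by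
  have h : c < exp (c - 1) := by linarith [add_one_lt_exp (sub_ne_zero.mpr hc)]
  calc c * exp (-c) < exp (c - 1) * exp (-c) := by gcongr
    _ = exp (-1) := by rw [← exp_add]; ring_nf

noncomputable def powSelfSeries : FormalMultilinearSeries ℝ ℝ ℝ :=
  .ofScalars ℝ fun k => (k : ℝ) ^ k / k !

theorem powSelfSeries_sum (x : ℝ) :
    powSelfSeries.sum x = ∑' k : ℕ, (k : ℝ) ^ k / k ! * x ^ k := by
  simp [powSelfSeries, FormalMultilinearSeries.sum, mul_comm]

theorem exp_neg_one_le_radius_powSelfSeries :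
    ENNReal.ofReal (exp (-1)) ≤ powSelfSeries.radius := by
  refine powSelfSeries.le_radius_of_bound 1 fun k => ?_
  rw [powSelfSeries, FormalMultilinearSeries.ofScalars_norm, Real.coe_toNNReal _ (exp_pos _).le,
    norm_of_nonneg (by positivity), ← exp_nat_mul]
  calc (k : ℝ) ^ k / k ! * exp (k * -1) ≤ exp k * exp (k * -1) := by
        gcongr; exact pow_div_factorial_le_exp _ k.cast_nonneg k
    _ = 1 := by rw [← exp_add]; simp

theorem analyticOnNhd_powSelfSeries_sum :
    AnalyticOnNhd ℝ powSelfSeries.sum (ball 0 (exp (-1))) := by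
  have hpos : 0 < powSelfSeries.radius :=
    lt_of_lt_of_le (by simp [exp_pos]) exp_neg_one_le_radius_powSelfSeries
  refine (powSelfSeries.hasFPowerSeriesOnBall hpos).analyticOnNhd.mono ?_
  rw [← eball_ofReal]
  exact eball_subset_eball exp_neg_one_le_radius_powSelfSeries

theorem one_sub_mul_powSelfSeries_sum_mul_exp_neg {c : ℝ} (hc : c ∈ Set.Ioo 0 1) :
    (1 - c) * powSelfSeries.sum (c * exp (-c)) = 1 := by
  have hmaps : Set.MapsTo (fun c => c * exp (-c)) (Set.Ioo 0 1) (ball 0 (exp (-1))) :=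
    fun c hc => by
      rw [mem_ball_zero_iff, norm_of_nonneg (mul_nonneg hc.1.le (exp_pos _).le)]
      exact mul_exp_neg_lt_exp_neg_one hc.2.ne
  have hG : AnalyticOnNhd ℝ (fun c => (1 - c) * powSelfSeries.sum (c * exp (-c))) (Set.Ioo 0 1) :=
    (analyticOnNhd_const.sub analyticOnNhd_id).mul <| analyticOnNhd_powSelfSeries_sum.comp
      (fun _ _ => analyticAt_id.mul (analyticAt_rexp.comp analyticAt_id.neg)) hmaps
  have hsmall : ∀ c ∈ Set.Ioo (0 : ℝ) (1 / 9),
      (1 - c) * powSelfSeries.sum (c * exp (-c)) = 1 := by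
    rintro c ⟨hc0, hc9⟩
    have he : exp (c + 1) < 9 := by
      calc exp (c + 1) < exp 1 * exp 1 := by rw [← exp_add]; gcongr; linarith
        _ < 9 := by nlinarith [exp_one_lt_three, exp_pos 1]
    rw [powSelfSeries_sum, tsum_pow_self_div_factorial_mul_pow_mul_exp_neg hc0.le (by nlinarith)]
    exact mul_inv_cancel₀ (by linarith)
  refine hG.eqOn_of_preconnected_of_eventuallyEq analyticOnNhd_const isPreconnected_Ioo
    (z₀ := 1 / 18) (by norm_num) ?_ hc
  filter_upwards [Ioo_mem_nhds (by norm_num : (0 : ℝ) < 1 / 18)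
    (by norm_num : (1 / 18 : ℝ) < 1 / 9)] using hsmall

theorem stmt_3 (c : ℝ) (hc : c ∈ Set.Ioo (0:ℝ) 1) :
    (∀ k : ℕ, 0 ≤ ((k : ℝ) ^ k / (Nat.factorial k)) * (1 - c) * c ^ k *
      Real.exp (-(k * c))) ∧
    (∑' k : ℕ, ((k : ℝ) ^ k / (Nat.factorial k)) * (1 - c) * c ^ k *
      Real.exp (-(k * c))) = 1 := by
  refine ⟨fun k => ?_, ?_⟩
  · have hc0 : 0 ≤ c := hc.1.le
    have hc1 : 0 ≤ 1 - c := sub_nonneg.mpr hc.2.le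
    positivity
  · calc ∑' k : ℕ, (k : ℝ) ^ k / k ! * (1 - c) * c ^ k * exp (-(k * c))
        = (1 - c) * powSelfSeries.sum (c * exp (-c)) := by
          rw [powSelfSeries_sum, ← tsum_mul_left]
          refine tsum_congr fun k => ?_
          rw [mul_pow, ← exp_nat_mul]
          ring_nf
      _ = 1 := one_sub_mul_powSelfSeries_sum_mul_exp_neg hc
end

section
/- Let t_{ν,δ} denote the noncentral t density with ν > 0 degrees of freedom and noncentrality δ > 0, and t_ν the central t density. Then the likelihood ratio ρ(x) = t_{ν,δ}(x)/t_ν(x) satisfies lim_{x→∞} ρ(x) = e^{-δ²/2} ∑_{k=0}^∞ Γ((ν+k+1)/2) (√2 δ)^k / (k! Γ((ν+1)/2)), and this limit is finite. -/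
/-!
Writing `a k = Γ((ν+k+1)/2) (√2 δ)^k / k!`, the `k`-th term of the series defining `ρ x` is
`a k * (x / √(ν + x²))^k`. Log-convexity of `Γ` gives `Γ(s + 1/2) ≤ √s Γ(s)`, so the ratio
`a (k+1) / a k` is `O(1/√k)` and `∑ a k` converges for every `ν` and `δ`. Since `x / √(ν + x²)`
tends to `1` and has absolute value at most `1`, Tannery's theorem lets the limit pass through the sum.
-/

open Filter Real Topology
open scoped Nat

theorem Real.Gamma_add_half_le_sqrt_mul_Gamma {x : ℝ} (hx : 0 < x) :
    Gamma (x + 1 / 2) ≤ √x * Gamma x := by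
  have hΓ := (Gamma_pos_of_pos hx).le
  have h := Gamma_mul_add_mul_le_rpow_Gamma_mul_rpow_Gamma hx (by linarith : 0 < x + 1)
    one_half_pos one_half_pos (add_halves 1)
  rwa [Gamma_add_one hx.ne', mul_rpow hx.le hΓ, mul_left_comm, ← rpow_add' hΓ (by norm_num),
    add_halves, rpow_one, ← sqrt_eq_rpow, show 1 / 2 * x + 1 / 2 * (x + 1) = x + 1 / 2 by ring]
    at h

theorem summable_Gamma_mul_pow_div_factorial (ν c : ℝ) :
    Summable fun k : ℕ => Gamma ((ν + k + 1) / 2) * c ^ k / k ! := by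
  refine summable_of_ratio_norm_eventually_le (r := 1 / 2) (by norm_num) ?_
  filter_upwards [eventually_ge_atTop ⌈max |ν| (4 * c ^ 2)⌉₊] with k hk
  have hk' : max |ν| (4 * c ^ 2) ≤ k := Nat.ceil_le.mp hk
  set x := (ν + k + 1) / 2 with hx_def
  have hx : 0 < x := by have := neg_abs_le ν; have := le_of_max_le_left hk'; linarith
  have hx_le : x ≤ k + 1 := by have := le_abs_self ν; have := le_of_max_le_left hk'; linarith
  have hc : 4 * c ^ 2 ≤ k := le_of_max_le_right hk'
  have hsqrt : √x * |c| ≤ (k + 1) / 2 := by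
    nlinarith [sq_sqrt hx.le, sqrt_nonneg x, abs_nonneg c, sq_abs c]
  have hΓ := Gamma_pos_of_pos hx
  calc ‖Gamma ((ν + ↑(k + 1) + 1) / 2) * c ^ (k + 1) / ↑(k + 1)!‖
      = Gamma (x + 1 / 2) * |c| ^ k * |c| / ((k + 1) * k !) := by
        rw [show (ν + ↑(k + 1) + 1) / 2 = x + 1 / 2 by push_cast; ring, Nat.factorial_succ,
          norm_div, norm_mul, norm_pow, Real.norm_of_nonneg (Gamma_pos_of_pos (by linarith)).le,
          RCLike.norm_natCast, Real.norm_eq_abs, pow_succ]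
        push_cast
        ring
    _ ≤ √x * Gamma x * |c| ^ k * |c| / ((k + 1) * k !) := by
        gcongr; exact Gamma_add_half_le_sqrt_mul_Gamma hx
    _ = (√x * |c|) / (k + 1) * (Gamma x * |c| ^ k / k !) := by field_simp
    _ ≤ 1 / 2 * ‖Gamma x * c ^ k / (k ! : ℝ)‖ := by
        rw [norm_div, norm_mul, norm_pow, Real.norm_of_nonneg hΓ.le, Real.norm_eq_abs,
          RCLike.norm_natCast]
        refine mul_le_mul_of_nonneg_right ?_ (by positivity)
        rw [div_le_iff₀ (by positivity)]
        linarith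

theorem tendsto_div_sqrt_add_sq_atTop (ν : ℝ) :
    Tendsto (fun x : ℝ => x / √(ν + x ^ 2)) atTop (𝓝 1) := by
  have hpos : Tendsto (fun x : ℝ => ν + x ^ 2) atTop atTop :=
    tendsto_atTop_add_const_left _ ν (tendsto_pow_atTop two_ne_zero)
  have hlim : Tendsto (fun x : ℝ => √(1 - ν / (ν + x ^ 2))) atTop (𝓝 1) := by
    simpa using ((tendsto_const_nhds.div_atTop hpos).const_sub 1).sqrt
  refine hlim.congr' ?_
  filter_upwards [hpos.eventually_gt_atTop 0, eventually_ge_atTop 0] with x hA hx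
  rw [show 1 - ν / (ν + x ^ 2) = x ^ 2 / (ν + x ^ 2) by field_simp; ring,
    sqrt_div (sq_nonneg x), sqrt_sq hx]

theorem abs_div_sqrt_add_sq_le_one {ν : ℝ} (hν : 0 ≤ ν) (x : ℝ) : |x / √(ν + x ^ 2)| ≤ 1 := by
  rw [abs_div, abs_of_nonneg (sqrt_nonneg _)]
  exact div_le_one_of_le₀ (abs_le_sqrt (by linarith)) (sqrt_nonneg _)

theorem tendsto_tsum_mul_pow_of_norm_le_one {α 𝕜 : Type*} [NormedField 𝕜] [CompleteSpace 𝕜]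
    {l : Filter α} {a : ℕ → 𝕜} {g : α → 𝕜} {z : 𝕜} (ha : Summable (‖a ·‖))
    (hg : Tendsto g l (𝓝 z)) (hg_le : ∀ᶠ y in l, ‖g y‖ ≤ 1) :
    Tendsto (fun y => ∑' k, a k * g y ^ k) l (𝓝 (∑' k, a k * z ^ k)) :=
  tendsto_tsum_of_dominated_convergence ha (fun k => (hg.pow k).const_mul (a k)) <|
    hg_le.mono fun y hy k => by
      rw [norm_mul, norm_pow]
      exact mul_le_of_le_one_right (norm_nonneg _) (pow_le_one₀ (norm_nonneg _) hy)

theorem stmt_7_general (ν δ : ℝ) (hν : 0 < ν)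
    (ρ : ℝ → ℝ)
    (hρ : ∀ x, ρ x = Real.exp (-δ ^ 2 / 2) *
      (∑' k : ℕ, Real.Gamma ((ν + k + 1) / 2) * (δ * x) ^ k / (Nat.factorial k) *
        (2 / (ν + x ^ 2)) ^ ((k : ℝ) / 2)) / Real.Gamma ((ν + 1) / 2)) :
    Summable (fun k : ℕ =>
      Real.Gamma ((ν + k + 1) / 2) * (Real.sqrt 2 * δ) ^ k / (Nat.factorial k)) ∧
    Tendsto ρ atTop (nhds (Real.exp (-δ ^ 2 / 2) *
      (∑' k : ℕ, Real.Gamma ((ν + k + 1) / 2) * (Real.sqrt 2 * δ) ^ k /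
        (Nat.factorial k)) / Real.Gamma ((ν + 1) / 2))) := by
  set a : ℕ → ℝ := fun k => Gamma ((ν + k + 1) / 2) * (√2 * δ) ^ k / (k ! : ℝ)
  have ha : Summable a := summable_Gamma_mul_pow_div_factorial ν (√2 * δ)
  have hterm (x : ℝ) (k : ℕ) : Gamma ((ν + k + 1) / 2) * (δ * x) ^ k / k ! *
      (2 / (ν + x ^ 2)) ^ ((k : ℝ) / 2) = a k * (x / √(ν + x ^ 2)) ^ k := by
    rw [rpow_div_two_eq_sqrt _ (by positivity), rpow_natCast, sqrt_div zero_le_two]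
    ring
  have hseries := tendsto_tsum_mul_pow_of_norm_le_one ha.norm (tendsto_div_sqrt_add_sq_atTop ν)
    (.of_forall fun x => (Real.norm_eq_abs _).trans_le (abs_div_sqrt_add_sq_le_one hν.le x))
  simp only [one_pow, mul_one] at hseries
  refine ⟨ha, ((hseries.const_mul _).div_const _).congr fun x => ?_⟩
  simp only [hρ, hterm]

theorem stmt_7 (ν δ : ℝ) (hν : 0 < ν) (hδ : 0 < δ)
    (ρ : ℝ → ℝ)
    (hρ : ∀ x, ρ x = Real.exp (-δ ^ 2 / 2) *
      (∑' k : ℕ, Real.Gamma ((ν + k + 1) / 2) * (δ * x) ^ k / (Nat.factorial k) *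
        (2 / (ν + x ^ 2)) ^ ((k : ℝ) / 2)) / Real.Gamma ((ν + 1) / 2)) :
    Summable (fun k : ℕ =>
      Real.Gamma ((ν + k + 1) / 2) * (Real.sqrt 2 * δ) ^ k / (Nat.factorial k)) ∧
    Tendsto ρ atTop (nhds (Real.exp (-δ ^ 2 / 2) *
      (∑' k : ℕ, Real.Gamma ((ν + k + 1) / 2) * (Real.sqrt 2 * δ) ^ k /
        (Nat.factorial k)) / Real.Gamma ((ν + 1) / 2))) :=
  stmt_7_general ν δ hν ρ hρ
end
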